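/- The dimension of the 2D local Bell space V_T = {v ∈ Q_k : ∂_n v|_e ∈ Q_{k−1}(e) for each edge e} equals (k+1)^2 − 4 for k ≥ 4. -/

import Mathlib

/-!
On `Q_k`, of dimension `(k+1)²`, the restriction of `∂_y v` to a horizontal edge, or of `∂_x v`
to a vertical one, has degree at most `k`, so each edge condition says that its `t^k` coefficient
vanishes: the Bell space is the kernel of a linear map `Q_k → ℝ⁴`. This map is onto, because
`x^k y`, `x^k y²`, `x y^k`, `x² y^k` are sent to `(1,1,0,0)`, `(0,2,0,0)`, `(0,0,1,1)`,
`(0,0,0,2)`, and rank–nullity gives `(k+1)² - 4`.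
-/

open MvPolynomial

namespace MvPolynomial

variable {R σ : Type*} [CommSemiring R]

theorem degreeOf_pderiv_le (i j : σ) (p : MvPolynomial σ R) :
    (pderiv i p).degreeOf j ≤ p.degreeOf j := by
  classical
  refine degreeOf_le_iff.mpr fun s hs => ?_
  have hcoeff : coeff (s + Finsupp.single i 1) p ≠ 0 := by
    rw [mem_support_iff, coeff_pderiv] at hs
    exact left_ne_zero_of_mul hs
  calc s j ≤ (s + Finsupp.single i 1 : σ →₀ ℕ) j := by simp
    _ ≤ p.degreeOf j := monomial_le_degreeOf j (mem_support_iff.mpr hcoeff)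

theorem natDegree_aeval_le_degreeOf {m : σ → Polynomial R} {j : σ}
    (hj : (m j).natDegree ≤ 1) (hm : ∀ i ≠ j, (m i).natDegree = 0) (p : MvPolynomial σ R) :
    (aeval m p).natDegree ≤ p.degreeOf j := by
  classical
  conv_lhs => rw [p.as_sum, map_sum]
  refine Polynomial.natDegree_sum_le_of_forall_le _ _ fun s hs => ?_
  rw [aeval_monomial]
  calc _ ≤ (s.prod fun i e => m i ^ e).natDegree := Polynomial.natDegree_C_mul_le _ _
    _ ≤ ∑ i ∈ s.support, (m i ^ s i).natDegree := Polynomial.natDegree_prod_le _ _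
    _ ≤ ∑ i ∈ s.support, if i = j then s i else 0 := Finset.sum_le_sum fun i _ => by
        refine Polynomial.natDegree_pow_le.trans ?_
        split_ifs with h
        · subst h
          simpa using Nat.mul_le_mul_left (s i) hj
        · simp [hm i h]
    _ ≤ s j := by rw [Finset.sum_ite_eq']; split_ifs <;> simp
    _ ≤ p.degreeOf j := monomial_le_degreeOf j hs

theorem mem_restrictDegree_iff_degreeOf_le (p : MvPolynomial σ R) (n : ℕ) :
    p ∈ restrictDegree σ R n ↔ ∀ i, p.degreeOf i ≤ n := by
  simp only [mem_restrictDegree, degreeOf_le_iff]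
  exact ⟨fun h i s hs => h s hs i, fun h s hs i => h i s hs⟩

theorem finrank_restrictDegree (K : Type*) [Field K] [Fintype σ] (n : ℕ) :
    Module.finrank K (restrictDegree σ K n) = (n + 1) ^ Fintype.card σ := by
  have e : {f : σ →₀ ℕ | ∀ i, f i ≤ n} ≃ (σ → Set.Iic n) :=
    (Finsupp.equivFunOnFinite.subtypeEquiv fun _ => Iff.rfl).trans
      (Equiv.subtypePiEquivPi (p := fun _ m => m ≤ n))
  rw [restrictDegree, Module.finrank_eq_nat_card_basis (basisRestrictSupport K _),
    Nat.card_congr e, Nat.card_fun]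
  simp

end MvPolynomial

theorem Polynomial.natDegree_le_pred_iff_coeff_eq_zero {R : Type*} [Semiring R]
    {p : Polynomial R} {n : ℕ} (hn : 0 < n) (hp : p.natDegree ≤ n) :
    p.natDegree ≤ n - 1 ↔ p.coeff n = 0 :=
  ⟨fun h => p.coeff_eq_zero_of_natDegree_lt (by omega), Polynomial.natDegree_le_pred hp⟩

theorem Submodule.finrank_inf_ker_add_finrank_of_map_eq_top {K V W : Type*} [DivisionRing K]
    [AddCommGroup V] [Module K V] [AddCommGroup W] [Module K W] (p : Submodule K V)
    [FiniteDimensional K p] (f : V →ₗ[K] W) (hf : p.map f = ⊤) :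
    Module.finrank K ↥(p ⊓ LinearMap.ker f) + Module.finrank K W = Module.finrank K p := by
  have hker : (LinearMap.ker (f ∘ₗ p.subtype)).map p.subtype = p ⊓ LinearMap.ker f := by
    rw [LinearMap.ker_comp, Submodule.map_comap_subtype]
  have hrange : LinearMap.range (f ∘ₗ p.subtype) = ⊤ := by
    rw [LinearMap.range_comp, Submodule.range_subtype, hf]
  rw [← hker, Submodule.finrank_map_subtype_eq, ← finrank_top K W, ← hrange, add_comm]
  exact LinearMap.finrank_range_add_finrank_ker _

section BellSpace

variable {R σ : Type*} [CommSemiring R]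

noncomputable def coeffAevalPderiv (n : ℕ) (m : σ → Polynomial R) (j : σ) :
    MvPolynomial σ R →ₗ[R] R :=
  Polynomial.lcoeff R n ∘ₗ (aeval m).toLinearMap ∘ₗ (pderiv j).toLinearMap

/-- The edges of `[0,1]²` are parametrized as `(t,0)`, `(t,1)`, `(0,t)`, `(1,t)`; on each of them
the normal derivative is `±∂_y` or `±∂_x`, and the sign does not affect the condition. -/
noncomputable def bellConstraints (k : ℕ) : MvPolynomial (Fin 2) R →ₗ[R] Fin 4 → R :=
  LinearMap.pi ![coeffAevalPderiv k ![Polynomial.X, Polynomial.C 0] 1,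
    coeffAevalPderiv k ![Polynomial.X, Polynomial.C 1] 1,
    coeffAevalPderiv k ![Polynomial.C 0, Polynomial.X] 0,
    coeffAevalPderiv k ![Polynomial.C 1, Polynomial.X] 0]

theorem bellConstraints_eq_zero_iff (k : ℕ) (v : MvPolynomial (Fin 2) R) :
    bellConstraints k v = 0 ↔
      (aeval ![Polynomial.X, Polynomial.C (0 : R)] (pderiv 1 v)).coeff k = 0 ∧
      (aeval ![Polynomial.X, Polynomial.C (1 : R)] (pderiv 1 v)).coeff k = 0 ∧
      (aeval ![Polynomial.C (0 : R), Polynomial.X] (pderiv 0 v)).coeff k = 0 ∧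
      (aeval ![Polynomial.C (1 : R), Polynomial.X] (pderiv 0 v)).coeff k = 0 := by
  simp [bellConstraints, coeffAevalPderiv, _root_.funext_iff, Fin.forall_fin_succ]

theorem setOf_bellConditions_eq_restrictDegree_inf_ker {k : ℕ} (hk : 0 < k) :
    {v : MvPolynomial (Fin 2) R |
        v.degreeOf 0 ≤ k ∧ v.degreeOf 1 ≤ k ∧
        (aeval ![Polynomial.X, Polynomial.C (0 : R)] (pderiv 1 v)).natDegree ≤ k - 1 ∧
        (aeval ![Polynomial.X, Polynomial.C (1 : R)] (pderiv 1 v)).natDegree ≤ k - 1 ∧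
        (aeval ![Polynomial.C (0 : R), Polynomial.X] (pderiv 0 v)).natDegree ≤ k - 1 ∧
        (aeval ![Polynomial.C (1 : R), Polynomial.X] (pderiv 0 v)).natDegree ≤ k - 1} =
      ↑(restrictDegree (Fin 2) R k ⊓ LinearMap.ker (bellConstraints k)) := by
  ext v
  have horizontal (c : R) (j : Fin 2) (h : v.degreeOf 0 ≤ k) :
      (aeval ![Polynomial.X, Polynomial.C c] (pderiv j v)).natDegree ≤ k - 1 ↔
        (aeval ![Polynomial.X, Polynomial.C c] (pderiv j v)).coeff k = 0 :=
    Polynomial.natDegree_le_pred_iff_coeff_eq_zero hk <|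
      (natDegree_aeval_le_degreeOf (m := ![Polynomial.X, Polynomial.C c]) (j := 0)
        Polynomial.natDegree_X_le (by simp [Fin.forall_fin_two]) _).trans
          ((degreeOf_pderiv_le _ _ _).trans h)
  have vertical (c : R) (j : Fin 2) (h : v.degreeOf 1 ≤ k) :
      (aeval ![Polynomial.C c, Polynomial.X] (pderiv j v)).natDegree ≤ k - 1 ↔
        (aeval ![Polynomial.C c, Polynomial.X] (pderiv j v)).coeff k = 0 :=
    Polynomial.natDegree_le_pred_iff_coeff_eq_zero hk <|
      (natDegree_aeval_le_degreeOf (m := ![Polynomial.C c, Polynomial.X]) (j := 1)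
        Polynomial.natDegree_X_le (by simp [Fin.forall_fin_two]) _).trans
          ((degreeOf_pderiv_le _ _ _).trans h)
  simp only [Set.mem_ofPred_eq, SetLike.mem_coe, Submodule.mem_inf, LinearMap.mem_ker,
    mem_restrictDegree_iff_degreeOf_le, Fin.forall_fin_two, bellConstraints_eq_zero_iff]
  rw [← and_assoc]
  refine and_congr_right fun ⟨h0, h1⟩ => ?_
  rw [horizontal 0 1 h0, horizontal 1 1 h0, vertical 0 0 h1, vertical 1 0 h1]

theorem bellConstraints_X_pow_self_mul_X_pow {k b : ℕ} (hk : 2 ≤ k) (hb : b ≠ k) :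
    bellConstraints k (X 0 ^ k * X 1 ^ b : MvPolynomial (Fin 2) R) =
      ![(b : R) * 0 ^ (b - 1), b, 0, 0] := by
  ext i
  fin_cases i <;> simp [bellConstraints, coeffAevalPderiv, pderiv_X, Polynomial.coeff_X_pow,
    Polynomial.coeff_X_pow_mul', hb.symm, Polynomial.coeff_zero_eq_eval_zero,
    zero_pow (show k - 1 ≠ 0 by omega)]

theorem bellConstraints_X_pow_mul_X_pow_self {k b : ℕ} (hk : 2 ≤ k) (hb : b ≠ k) :
    bellConstraints k (X 0 ^ b * X 1 ^ k : MvPolynomial (Fin 2) R) =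
      ![0, 0, (b : R) * 0 ^ (b - 1), b] := by
  ext i
  fin_cases i <;> simp [bellConstraints, coeffAevalPderiv, pderiv_X, Polynomial.coeff_X_pow,
    Polynomial.coeff_X_pow_mul', hb.symm, Polynomial.coeff_zero_eq_eval_zero,
    zero_pow (show k - 1 ≠ 0 by omega)]

theorem map_bellConstraints_restrictDegree {K : Type*} [Field K] [NeZero (2 : K)] {k : ℕ}
    (hk : 3 ≤ k) : (restrictDegree (Fin 2) K k).map (bellConstraints k) = ⊤ := by
  have hmem {a b : ℕ} (ha : a ≤ k) (hb : b ≤ k) :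
      bellConstraints k (X 0 ^ a * X 1 ^ b) ∈
        (restrictDegree (Fin 2) K k).map (bellConstraints k) := by
    refine Submodule.mem_map_of_mem ?_
    rw [mem_restrictDegree_iff_degreeOf_le, Fin.forall_fin_two]
    constructor <;> refine (degreeOf_mul_le _ _ _).trans ?_ <;>
      simp [degreeOf_X_pow_of_ne, ha, hb]
  have e₁ := hmem le_rfl (show 1 ≤ k by omega)
  have e₂ := hmem le_rfl (show 2 ≤ k by omega)
  have e₃ := hmem (show 1 ≤ k by omega) le_rfl
  have e₄ := hmem (show 2 ≤ k by omega) le_rfl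
  rw [bellConstraints_X_pow_self_mul_X_pow (by omega) (by omega)] at e₁ e₂
  rw [bellConstraints_X_pow_mul_X_pow_self (by omega) (by omega)] at e₃ e₄
  norm_num only [Nat.cast_one, Nat.cast_ofNat] at e₁ e₂ e₃ e₄
  refine eq_top_iff.mpr fun w _ => ?_
  have hw : w = w 0 • ![1, 1, 0, 0] + ((w 1 - w 0) / 2) • ![0, 2, 0, 0] + w 2 • ![0, 0, 1, 1] +
      ((w 3 - w 2) / 2) • ![0, 0, 0, 2] := by
    ext i
    fin_cases i <;> simp <;> field_simp <;> ring
  rw [hw]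
  exact add_mem (add_mem (add_mem (Submodule.smul_mem _ _ e₁) (Submodule.smul_mem _ _ e₂))
    (Submodule.smul_mem _ _ e₃)) (Submodule.smul_mem _ _ e₄)

end BellSpace

/-- The dimension of the 2D local Bell space
`V_T = {v ∈ Q_k : ∂_n v|_e ∈ Q_{k−1}(e)` for each edge `e` of `[0,1]²}`
equals `(k+1)² − 4` for `k ≥ 4`. -/
theorem bell_space_dim (k : ℕ) (hk : 4 ≤ k) :
    Module.finrank ℝ
      ↥(Submodule.span ℝ
        {v : MvPolynomial (Fin 2) ℝ |
          v.degreeOf 0 ≤ k ∧ v.degreeOf 1 ≤ k ∧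
          (aeval ![Polynomial.X, Polynomial.C (0 : ℝ)] (pderiv 1 v)).natDegree ≤ k - 1 ∧
          (aeval ![Polynomial.X, Polynomial.C (1 : ℝ)] (pderiv 1 v)).natDegree ≤ k - 1 ∧
          (aeval ![Polynomial.C (0 : ℝ), Polynomial.X] (pderiv 0 v)).natDegree ≤ k - 1 ∧
          (aeval ![Polynomial.C (1 : ℝ), Polynomial.X] (pderiv 0 v)).natDegree ≤ k - 1}) =
      (k + 1) ^ 2 - 4 := by
  rw [setOf_bellConditions_eq_restrictDegree_inf_ker (by omega), Submodule.span_eq]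
  have h := (restrictDegree (Fin 2) ℝ k).finrank_inf_ker_add_finrank_of_map_eq_top _
    (map_bellConstraints_restrictDegree (by omega))
  rw [finrank_restrictDegree, Module.finrank_fin_fun, Fintype.card_fin] at h
  omega
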